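/- arXiv:2408.05146 — 3 statements merged into one kernel-verified Lean document; each statement's English description precedes it below -/
import Mathlib

section
/- On a path graph with three nodes (a − b − c) with threshold T = 2/3 and c < r, the only strict Nash equilibrium of the collective risk dilemma is all-defect; in particular no Nash equilibrium achieves full success. -/
open Finset

/-- Threshold number of cooperators required in a group of size `M`: `⌈T·M⌉`. -/
noncomputable def thr (T : ℝ) (M : ℕ) : ℤ := ⌈T * (M : ℝ)⌉

/-- Defector's payoff in a group of size `M` with `k` cooperators. -/
noncomputable def piD (B r T : ℝ) (M k : ℕ) : ℝ :=
  if thr T M ≤ (k : ℤ) then B else (1 - r) * B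

variable {V : Type*} [Fintype V] [DecidableEq V]

/-- Number of cooperating neighbors of `i` (excluding `i` itself). -/
def coopNbrs (G : SimpleGraph V) [DecidableRel G.Adj] (a : V → Bool) (i : V) : ℕ :=
  ((G.neighborFinset i).filter (fun j => a j = true)).card

/-- Number of cooperators in `i`'s group (its neighbors together with `i` itself). -/
def coopCount (G : SimpleGraph V) [DecidableRel G.Adj] (a : V → Bool) (i : V) : ℕ :=
  coopNbrs G a i + (if a i then 1 else 0)

/-- Payoff of agent `i` under action profile `a` in the collective risk dilemma on `G`:
defector's payoff of its group, minus the cost `c·B` if it cooperates. -/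
noncomputable def payoff (G : SimpleGraph V) [DecidableRel G.Adj]
    (B r c T : ℝ) (a : V → Bool) (i : V) : ℝ :=
  piD B r T (G.degree i + 1) (coopCount G a i) - (if a i then c * B else 0)

/-- A strict Nash equilibrium: every unilateral deviation strictly decreases
the deviator's payoff. -/
noncomputable def strictNash (G : SimpleGraph V) [DecidableRel G.Adj]
    (B r c T : ℝ) (a : V → Bool) : Prop :=
  ∀ i, payoff G B r c T (Function.update a i (!a i)) i < payoff G B r c T a i

/-- Full success: every agent's group meets its cooperation threshold. -/
def fullSuccess (G : SimpleGraph V) [DecidableRel G.Adj] (T : ℝ) (a : V → Bool) : Prop :=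
  ∀ i, thr T (G.degree i + 1) ≤ (coopCount G a i : ℤ)

/-- The path graph on three nodes `0 — 1 — 2`. -/
def pathG : SimpleGraph (Fin 3) where
  Adj i j := (i.val + 1 = j.val ∧ j.val ≤ 2) ∨ (j.val + 1 = i.val ∧ i.val ≤ 2)
  symm := ⟨by intro a b h; tauto⟩
  loopless := ⟨by intro a h; omega⟩

instance : DecidableRel pathG.Adj := fun a b =>
  inferInstanceAs (Decidable ((a.val + 1 = b.val ∧ b.val ≤ 2) ∨ (b.val + 1 = a.val ∧ a.val ≤ 2)))


lemma nb0 : pathG.neighborFinset 0 = {1} := by decide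
lemma nb1 : pathG.neighborFinset 1 = {0, 2} := by decide
lemma nb2 : pathG.neighborFinset 2 = {1} := by decide
lemma deg0 : pathG.degree 0 = 1 := by decide
lemma deg1 : pathG.degree 1 = 2 := by decide
lemma deg2 : pathG.degree 2 = 1 := by decide
lemma thr2 : thr (2/3) 2 = 2 := by unfold thr; norm_num [Int.ceil_eq_iff]
lemma thr3 : thr (2/3) 3 = 2 := by unfold thr; norm_num [Int.ceil_eq_iff]

/-- A (weak) Nash equilibrium: no unilateral deviation improves the deviator's payoff. -/
noncomputable def nash (B r c T : ℝ) (a : Fin 3 → Bool) : Prop :=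
  ∀ i, payoff pathG B r c T (Function.update a i (!a i)) i ≤ payoff pathG B r c T a i

/-- on the three-node path with `T = 2/3` and `c < r`, the only strict
Nash equilibrium is all-defect; in particular no Nash equilibrium achieves full
success. -/
theorem path3_only_strictNash_allDefect
    (B r c T : ℝ) (hB : 0 < B) (hc0 : 0 < c) (hcr : c < r) (hr1 : r ≤ 1)
    (hT : T = 2 / 3) :
    (∀ a : Fin 3 → Bool, strictNash pathG B r c T a ↔ a = fun _ => false) ∧
    (∀ a : Fin 3 → Bool, nash B r c T a → ¬ fullSuccess pathG T a) := by
  subst hT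
  have hcB : 0 < c * B := mul_pos hc0 hB
  constructor
  · intro a
    constructor
    · intro hsn
      cases h0 : a 0 <;> cases h1 : a 1 <;> cases h2 : a 2
      · funext i; fin_cases i <;> simp [h0, h1, h2]
      · exact absurd (hsn 2) (by
          simp [payoff, piD, coopCount, coopNbrs, nb2, deg2, Function.update, h0, h1, h2,
            thr2, thr3, filter_insert, filter_singleton]; nlinarith)
      · exact absurd (hsn 1) (by
          simp [payoff, piD, coopCount, coopNbrs, nb1, deg1, Function.update, h0, h1, h2,
            thr2, thr3, filter_insert, filter_singleton]; nlinarith)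
      · exact absurd (hsn 0) (by
          simp [payoff, piD, coopCount, coopNbrs, nb0, deg0, Function.update, h0, h1, h2,
            thr2, thr3, filter_insert, filter_singleton]; nlinarith)
      · exact absurd (hsn 0) (by
          simp [payoff, piD, coopCount, coopNbrs, nb0, deg0, Function.update, h0, h1, h2,
            thr2, thr3, filter_insert, filter_singleton]; nlinarith)
      · exact absurd (hsn 0) (by
          simp [payoff, piD, coopCount, coopNbrs, nb0, deg0, Function.update, h0, h1, h2,
            thr2, thr3, filter_insert, filter_singleton]; nlinarith)
      · exact absurd (hsn 2) (by
          simp [payoff, piD, coopCount, coopNbrs, nb2, deg2, Function.update, h0, h1, h2,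
            thr2, thr3, filter_insert, filter_singleton]; nlinarith)
      · exact absurd (hsn 1) (by
          simp [payoff, piD, coopCount, coopNbrs, nb1, deg1, Function.update, h0, h1, h2,
            thr2, thr3, filter_insert, filter_singleton]; nlinarith)
    · rintro rfl
      intro i; fin_cases i <;>
        simp [payoff, piD, coopCount, coopNbrs, nb0, nb1, nb2, deg0, deg1, deg2,
          Function.update, thr2, thr3, filter_insert, filter_singleton] <;> nlinarith
  · intro a hn hfs
    cases h0 : a 0 <;> cases h1 : a 1 <;> cases h2 : a 2
    all_goals first
      | (exact (by simpa [fullSuccess, coopCount, coopNbrs, nb0, deg0, h0, h1, h2, thr2,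
           filter_insert, filter_singleton] using hfs 0 : False))
      | (exact (by simpa [fullSuccess, coopCount, coopNbrs, nb2, deg2, h0, h1, h2, thr2,
           filter_insert, filter_singleton] using hfs 2 : False))
      | (have h := hn 1;
         simp [payoff, piD, coopCount, coopNbrs, nb1, deg1, Function.update, h0, h1, h2,
           thr2, thr3, filter_insert, filter_singleton] at h;
         nlinarith)
end

section
/- Sufficient condition for unattainable full success: suppose a finite graph G has a hub node H whose degree exceeds that of all its neighbors (M_i < M_H for all i ∈ N(H)), the threshold is T = (M_H − 1)/M_H, and every neighbor i of H has some neighbor j ≠ H with M_j < M_H. Then with 0 < c < r, no action profile is simultaneously best-response-consistent for every agent and achieves full success. -/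
open Finset

variable {V : Type*} [Fintype V] [DecidableEq V]

/-- Best-response-consistent profile: each agent cooperates iff exactly
`⌈T·M_i⌉ - 1` of its neighbors cooperate (the unique best response when `0 < c < r`). -/
def brConsistent (G : SimpleGraph V) [DecidableRel G.Adj] (T : ℝ) (a : V → Bool) : Prop :=
  ∀ i, a i = true ↔ (coopNbrs G a i : ℤ) = thr T (G.degree i + 1) - 1

/-- if a graph has a hub node `H` (with at least one neighbor) whose
degree exceeds that of all its neighbors, the threshold is `T = (M_H - 1)/M_H`, and
every neighbor of `H` has some neighbor `j ≠ H` with `M_j < M_H`, then no action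
profile is simultaneously best-response-consistent and fully successful. -/
theorem hub_condition_no_fullSuccess
    (G : SimpleGraph V) [DecidableRel G.Adj] (T : ℝ) (H : V)
    (hHdeg : 0 < G.degree H)
    (hhub : ∀ i ∈ G.neighborFinset H, G.degree i + 1 < G.degree H + 1)
    (hT : T = ((G.degree H + 1 : ℕ) - 1 : ℝ) / ((G.degree H + 1 : ℕ) : ℝ))
    (hnbr : ∀ i ∈ G.neighborFinset H,
      ∃ j ∈ G.neighborFinset i, j ≠ H ∧ G.degree j + 1 < G.degree H + 1) :
    ¬ ∃ a : V → Bool, brConsistent G T a ∧ fullSuccess G T a := by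
  rintro ⟨a, hbr, hfs⟩
  set d := G.degree H with hd
  have hdpos : (0:ℝ) < (d:ℝ) + 1 := by positivity
  -- threshold at the hub is d
  have thrH : thr T (d + 1) = (d : ℤ) := by
    have : T * ((d + 1 : ℕ) : ℝ) = (d : ℝ) := by
      rw [hT]
      push_cast
      field_simp
      ring
    simp only [thr, this]
    exact_mod_cast Int.ceil_intCast (d : ℤ)
  -- threshold at any vertex with smaller group is full group
  have thrSmall : ∀ i : V, G.degree i + 1 < d + 1 → thr T (G.degree i + 1) = (G.degree i + 1 : ℤ) := by
    intro i hi
    have hmlt : ((G.degree i : ℝ) + 1) < (d:ℝ) + 1 := by exact_mod_cast hi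
    have hq1 : ((G.degree i : ℝ) + 1) / ((d:ℝ) + 1) < 1 := (div_lt_one hdpos).mpr hmlt
    have hq0 : 0 < ((G.degree i : ℝ) + 1) / ((d:ℝ) + 1) := by positivity
    have hval : T * ((G.degree i + 1 : ℕ) : ℝ)
        = ((G.degree i : ℝ) + 1) - ((G.degree i : ℝ) + 1) / ((d:ℝ) + 1) := by
      rw [hT]; push_cast; field_simp
    rw [thr, hval, Int.ceil_eq_iff]
    constructor
    · push_cast; linarith
    · push_cast; linarith
  -- full success at a vertex with small group forces everyone in the group to cooperate
  have allCoop : ∀ i : V, G.degree i + 1 < d + 1 →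
      a i = true ∧ ∀ j ∈ G.neighborFinset i, a j = true := by
    intro i hi
    have h1 := hfs i
    rw [thrSmall i hi] at h1
    have hcnle : coopNbrs G a i ≤ G.degree i := by
      have := Finset.card_filter_le (G.neighborFinset i) (fun j => a j = true)
      simpa [coopNbrs, SimpleGraph.card_neighborFinset_eq_degree] using this
    have hcc : coopCount G a i = G.degree i + 1 := by
      have h2 : (G.degree i + 1 : ℕ) ≤ coopCount G a i := by exact_mod_cast h1
      have h3 : coopCount G a i ≤ G.degree i + 1 := by
        unfold coopCount
        by_cases h : a i <;> simp [h] <;> omega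
      omega
    have hai : a i = true := by
      by_contra h
      rw [Bool.not_eq_true] at h
      simp only [coopCount, h, if_neg Bool.false_ne_true] at hcc
      omega
    refine ⟨hai, ?_⟩
    have hcn : coopNbrs G a i = G.degree i := by
      simp only [coopCount, if_pos hai] at hcc; omega
    have hfull : ((G.neighborFinset i).filter (fun j => a j = true)) = G.neighborFinset i := by
      apply Finset.eq_of_subset_of_card_le (Finset.filter_subset _ _)
      rw [SimpleGraph.card_neighborFinset_eq_degree]
      exact le_of_eq hcn.symm
    intro j hj
    have := hfull ▸ hj
    have : j ∈ (G.neighborFinset i).filter (fun j => a j = true) := by rw [hfull]; exact hj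
    exact (Finset.mem_filter.mp this).2
  -- every neighbor of H cooperates, and H itself cooperates
  obtain ⟨i0, hi0⟩ := Finset.card_pos.mp (show 0 < (G.neighborFinset H).card by
    rw [G.card_neighborFinset_eq_degree H]; exact hHdeg)
  have haH : a H = true := by
    exact (allCoop i0 (hhub i0 hi0)).2 H
      ((G.mem_neighborFinset i0 H).mpr ((G.mem_neighborFinset H i0).mp hi0).symm)
  have hallnbr : ∀ j ∈ G.neighborFinset H, a j = true := by
    intro j hj
    exact (allCoop j (hhub j hj)).1
  have hcnH : coopNbrs G a H = d := by
    unfold coopNbrs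
    rw [Finset.filter_true_of_mem hallnbr, SimpleGraph.card_neighborFinset_eq_degree]
  have := (hbr H).mp haH
  rw [thrH, hcnH] at this
  omega
end

section
/- In the collective risk dilemma on an arbitrary graph with c < r, any profile in which every agent's group has exactly ⌈T·M_i⌉ cooperators and every cooperator is pivotal (i.e., for each cooperating agent i, exactly ⌈T·M_i⌉ − 1 of its neighbors cooperate) is a strict Nash equilibrium. -/
open Finset

variable {V : Type*} [Fintype V] [DecidableEq V]

lemma coopNbrs_update (G : SimpleGraph V) [DecidableRel G.Adj] (a : V → Bool) (i : V) (b : Bool) :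
    coopNbrs G (Function.update a i b) i = coopNbrs G a i := by
  unfold coopNbrs
  congr 1
  apply Finset.filter_congr
  intro j hj
  simp only [SimpleGraph.mem_neighborFinset] at hj
  rw [Function.update_of_ne (G.ne_of_adj hj).symm]

/-- with `c < r`, any profile in which every agent's group has exactly
`⌈T·M_i⌉` cooperators, every cooperator is pivotal (exactly `⌈T·M_i⌉ - 1` of its
neighbors cooperate), and no defector has exactly `⌈T·M_i⌉ - 1` cooperating
neighbors, is a strict Nash equilibrium. -/
theorem pivotal_profile_strictNash (G : SimpleGraph V) [DecidableRel G.Adj]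
    (B r c T : ℝ) (a : V → Bool)
    (hB : 0 < B) (hc0 : 0 < c) (hcr : c < r) (hr1 : r ≤ 1)
    (hexact : ∀ i : V, (coopCount G a i : ℤ) = thr T (G.degree i + 1))
    (hpivot : ∀ i : V, a i = true →
      (coopNbrs G a i : ℤ) = thr T (G.degree i + 1) - 1)
    (hdefect : ∀ i : V, a i = false →
      (coopNbrs G a i : ℤ) ≠ thr T (G.degree i + 1) - 1) :
    strictNash G B r c T a := by
  intro i
  have hn := coopNbrs_update G a i (!a i)
  unfold payoff coopCount piD
  cases h : a i with
  | true =>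
    have hp := hpivot i h
    have he := hexact i
    unfold coopCount coopNbrs at he
    simp only [h, Bool.not_true] at hn
    simp only [h, Function.update_self, Bool.not_true, hn, if_true, if_false,
      Bool.false_eq_true, add_zero, if_pos rfl] at he ⊢
    have h1 : ¬ thr T (G.degree i + 1) ≤ ((coopNbrs G a i : ℕ) : ℤ) := by
      unfold coopNbrs at *; push_cast at *; omega
    have h2 : thr T (G.degree i + 1) ≤ ((coopNbrs G a i + 1 : ℕ) : ℤ) := by
      unfold coopNbrs at *; push_cast at *; omega
    rw [if_neg h1, if_pos h2]
    nlinarith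
  | false =>
    have hd := hdefect i h
    have he := hexact i
    unfold coopCount coopNbrs at he
    simp only [h, Bool.not_false] at hn
    simp only [h, Function.update_self, Bool.not_false, hn, if_true, if_false,
      Bool.false_eq_true, add_zero, if_pos rfl] at he ⊢
    have h1 : thr T (G.degree i + 1) ≤ ((coopNbrs G a i : ℕ) : ℤ) := by
      unfold coopNbrs at *; push_cast at *; omega
    have h2 : thr T (G.degree i + 1) ≤ ((coopNbrs G a i + 1 : ℕ) : ℤ) := by
      unfold coopNbrs at *; push_cast at *; omega
    rw [if_pos h1, if_pos h2]
    nlinarith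
end
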